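/- Let μ and ν be probability measures on X^n and Y^n respectively (X, Y finite), and μ⊗ν their parallel product on (X×Y)^n. Then for all 1 ≤ i < j ≤ n: η̄_{ij}(μ⊗ν) ≤ η̄_{ij}(μ) + η̄_{ij}(ν). -/

import Mathlib

open scoped BigOperators

/-- Probability (under `μ`) of the event that the first `i` coordinates agree with `z`. -/
noncomputable def prefProb {n : ℕ} {Ω : Type*} [Fintype Ω] [DecidableEq Ω] (μ : (Fin n → Ω) → ℝ) (i : ℕ)
    (z : Fin n → Ω) : ℝ :=
  ∑ x : Fin n → Ω, if ∀ t : Fin n, (t : ℕ) < i → x t = z t then μ x else 0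

/-- Conditional probability that the suffix `X_j,…,X_n` (1-based `j`) equals `s`,
given that the first `i` coordinates agree with `z`. -/
noncomputable def condSuffix {n : ℕ} {Ω : Type*} [Fintype Ω] [DecidableEq Ω]
    (μ : (Fin n → Ω) → ℝ) (i j : ℕ) (z : Fin n → Ω)
    (s : {t : Fin n // j ≤ (t : ℕ) + 1} → Ω) : ℝ :=
  (∑ x : Fin n → Ω,
      if (∀ t : Fin n, (t : ℕ) < i → x t = z t) ∧
          (∀ t : {t : Fin n // j ≤ (t : ℕ) + 1}, x t.1 = s t)
        then μ x else 0) / prefProb μ i z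

/-- Replace the `i`-th (1-based) coordinate of `y` by `w` (this encodes the prefix `yw`). -/
def setCoord {n : ℕ} {Ω : Type*} (y : Fin n → Ω) (i : ℕ) (w : Ω) : Fin n → Ω :=
  fun t => if (t : ℕ) + 1 = i then w else y t

/-- `η_{ij}(μ; y, w, w')`: total variation distance between the conditional laws of
`X_j,…,X_n` given the prefixes `yw` and `yw'`. -/
noncomputable def eta {n : ℕ} {Ω : Type*} [Fintype Ω] [DecidableEq Ω]
    (μ : (Fin n → Ω) → ℝ) (i j : ℕ) (y : Fin n → Ω) (w w' : Ω) : ℝ :=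
  (1 / 2) * ∑ s : {t : Fin n // j ≤ (t : ℕ) + 1} → Ω,
    |condSuffix μ i j (setCoord y i w) s - condSuffix μ i j (setCoord y i w') s|

/-- `η̄_{ij}(μ)`: the η-mixing coefficient. -/
noncomputable def etaBar {n : ℕ} {Ω : Type*} [Fintype Ω] [DecidableEq Ω]
    (μ : (Fin n → Ω) → ℝ) (i j : ℕ) : ℝ :=
  ⨆ y : Fin n → Ω, ⨆ w : Ω, ⨆ w' : Ω, eta μ i j y w w'

/-- `μ` is a probability mass function. -/
def IsProbMeas {α : Type*} [Fintype α] (μ : α → ℝ) : Prop :=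
  (∀ x, 0 ≤ μ x) ∧ ∑ x, μ x = 1

/-- The parallel product of measures `μ` on `X^n` and `ν` on `Y^n`, as a measure on
`(X × Y)^n`, viewing a sequence over `X × Y` as a pair of sequences. -/
def parProd {n : ℕ} {X Y : Type*} (μ : (Fin n → X) → ℝ) (ν : (Fin n → Y) → ℝ) :
    (Fin n → X × Y) → ℝ :=
  fun z => μ (fun t => (z t).1) * ν (fun t => (z t).2)

/-!
Conditioning the parallel product on a prefix of pairs factors: the conditional law of the
suffix under `μ ⊗ ν` is the product of the conditional suffix laws under `μ` and `ν`.
Since `|p p' - q q'| ≤ |p - q| p' + q |p' - q'|`, the total variation distance between two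
product laws is at most the sum of the distances between their factors, so each `η` of
`μ ⊗ ν` is bounded by an `η` of `μ` plus an `η` of `ν`.
-/

open Finset

section ProductSums

variable {ι X Y : Type*} [Fintype ι] [DecidableEq ι] [Fintype X] [Fintype Y]

theorem sum_pi_prod_eq_sum_sum (F : (ι → X) → (ι → Y) → ℝ) :
    ∑ z : ι → X × Y, F (fun t => (z t).1) (fun t => (z t).2) = ∑ a, ∑ b, F a b := by
  rw [← Fintype.sum_prod_type']
  exact Fintype.sum_equiv (Equiv.arrowProdEquivProdArrow ι (fun _ => X) (fun _ => Y)) _ _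
    fun _ => rfl

theorem sum_ite_and_pi_prod (μ : (ι → X) → ℝ) (ν : (ι → Y) → ℝ)
    (P : (ι → X) → Prop) [DecidablePred P] (Q : (ι → Y) → Prop) [DecidablePred Q] :
    ∑ z : ι → X × Y, (if P (fun t => (z t).1) ∧ Q (fun t => (z t).2)
        then μ (fun t => (z t).1) * ν (fun t => (z t).2) else 0)
      = (∑ a, if P a then μ a else 0) * ∑ b, if Q b then ν b else 0 := by
  rw [sum_pi_prod_eq_sum_sum (fun a b => if P a ∧ Q b then μ a * ν b else 0), sum_mul_sum]
  simp only [ite_zero_mul_ite_zero]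

end ProductSums

theorem sum_abs_mul_sub_mul_le {α β : Type*} [Fintype α] [Fintype β] (p q : α → ℝ)
    (p' q' : β → ℝ) (hq : ∀ a, 0 ≤ q a) (hp' : ∀ b, 0 ≤ p' b)
    (hq_sum : ∑ a, q a = 1) (hp'_sum : ∑ b, p' b = 1) :
    ∑ a, ∑ b, |p a * p' b - q a * q' b| ≤ ∑ a, |p a - q a| + ∑ b, |p' b - q' b| := by
  have hterm (a : α) (b : β) :
      |p a * p' b - q a * q' b| ≤ |p a - q a| * p' b + q a * |p' b - q' b| :=
    calc |p a * p' b - q a * q' b| = |(p a - q a) * p' b + q a * (p' b - q' b)| := by ring_nf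
      _ ≤ |(p a - q a) * p' b| + |q a * (p' b - q' b)| := abs_add_le _ _
      _ = |p a - q a| * p' b + q a * |p' b - q' b| := by
        rw [abs_mul, abs_mul, abs_of_nonneg (hp' b), abs_of_nonneg (hq a)]
  calc ∑ a, ∑ b, |p a * p' b - q a * q' b|
      ≤ ∑ a, ∑ b, (|p a - q a| * p' b + q a * |p' b - q' b|) :=
        sum_le_sum fun a _ => sum_le_sum fun b _ => hterm a b
    _ = (∑ a, |p a - q a|) * (∑ b, p' b) + (∑ a, q a) * ∑ b, |p' b - q' b| := by
        simp only [sum_add_distrib, ← mul_sum, ← sum_mul]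
    _ = ∑ a, |p a - q a| + ∑ b, |p' b - q' b| := by rw [hq_sum, hp'_sum, mul_one, one_mul]

theorem setCoord_comp {n : ℕ} {α β : Type*} (f : α → β) (y : Fin n → α) (i : ℕ) (w : α) :
    (fun t => f (setCoord y i w t)) = setCoord (fun t => f (y t)) i (f w) := by
  funext t
  exact apply_ite f _ _ _

section Conditional

variable {n : ℕ} {Ω : Type*} [Fintype Ω] [DecidableEq Ω] {μ : (Fin n → Ω) → ℝ}

theorem prefProb_pos (hμ : ∀ x, 0 < μ x) (i : ℕ) (z : Fin n → Ω) : 0 < prefProb μ i z :=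
  sum_pos' (fun x _ => by split_ifs <;> simp [(hμ x).le])
    ⟨z, mem_univ z, by simpa using hμ z⟩

theorem condSuffix_nonneg (hμ : ∀ x, 0 < μ x) (i j : ℕ) (z : Fin n → Ω)
    (s : {t : Fin n // j ≤ (t : ℕ) + 1} → Ω) : 0 ≤ condSuffix μ i j z s :=
  div_nonneg (sum_nonneg fun x _ => by split_ifs <;> simp [(hμ x).le])
    (prefProb_pos hμ i z).le

theorem sum_condSuffix (hμ : ∀ x, 0 < μ x) (i j : ℕ) (z : Fin n → Ω) :
    ∑ s, condSuffix μ i j z s = 1 := by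
  have hsuffix (x : Fin n → Ω) (P : Prop) [Decidable P] :
      ∑ s : {t : Fin n // j ≤ (t : ℕ) + 1} → Ω,
        (if P ∧ ∀ t : {t : Fin n // j ≤ (t : ℕ) + 1}, x t.1 = s t then μ x else 0)
        = if P then μ x else 0 := by
    by_cases hP : P <;> simp [hP, ← funext_iff]
  simp only [condSuffix, ← sum_div]
  rw [sum_comm]
  simp only [hsuffix]
  exact div_self (prefProb_pos hμ i z).ne'

end Conditional

section ParallelProduct

variable {n : ℕ} {X Y : Type*} [Fintype X] [DecidableEq X] [Fintype Y] [DecidableEq Y]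
  (μ : (Fin n → X) → ℝ) (ν : (Fin n → Y) → ℝ)

theorem prefProb_parProd (i : ℕ) (z : Fin n → X × Y) :
    prefProb (parProd μ ν) i z
      = prefProb μ i (fun t => (z t).1) * prefProb ν i (fun t => (z t).2) := by
  simp only [prefProb, ← sum_ite_and_pi_prod, parProd, Prod.ext_iff, forall_and]

theorem condSuffix_parProd (i j : ℕ) (z : Fin n → X × Y)
    (s : {t : Fin n // j ≤ (t : ℕ) + 1} → X × Y) :
    condSuffix (parProd μ ν) i j z s
      = condSuffix μ i j (fun t => (z t).1) (fun t => (s t).1)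
        * condSuffix ν i j (fun t => (z t).2) (fun t => (s t).2) := by
  simp only [condSuffix, div_mul_div_comm, ← prefProb_parProd, ← sum_ite_and_pi_prod,
    parProd, Prod.ext_iff, forall_and, and_and_and_comm]

theorem eta_parProd_le (hμ : ∀ x, 0 < μ x) (hν : ∀ y, 0 < ν y) (i j : ℕ)
    (y : Fin n → X × Y) (w w' : X × Y) :
    eta (parProd μ ν) i j y w w'
      ≤ eta μ i j (fun t => (y t).1) w.1 w'.1 + eta ν i j (fun t => (y t).2) w.2 w'.2 := by
  rw [eta, eta, eta, ← mul_add]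
  refine mul_le_mul_of_nonneg_left ?_ (by norm_num)
  simp only [condSuffix_parProd, setCoord_comp Prod.fst, setCoord_comp Prod.snd]
  exact (sum_pi_prod_eq_sum_sum _).trans_le <| sum_abs_mul_sub_mul_le _ _ _ _
    (condSuffix_nonneg hμ i j _) (condSuffix_nonneg hν i j _)
    (sum_condSuffix hμ i j _) (sum_condSuffix hν i j _)

end ParallelProduct

section EtaBar

variable {n : ℕ} {Ω : Type*} [Fintype Ω] [DecidableEq Ω] (μ : (Fin n → Ω) → ℝ) (i j : ℕ)

theorem eta_nonneg (y : Fin n → Ω) (w w' : Ω) : 0 ≤ eta μ i j y w w' :=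
  mul_nonneg (by norm_num) (sum_nonneg fun _ _ => abs_nonneg _)

theorem etaBar_nonneg : 0 ≤ etaBar μ i j :=
  Real.iSup_nonneg fun y => Real.iSup_nonneg fun w => Real.iSup_nonneg fun w' =>
    eta_nonneg μ i j y w w'

theorem eta_le_etaBar (y : Fin n → Ω) (w w' : Ω) : eta μ i j y w w' ≤ etaBar μ i j :=
  calc eta μ i j y w w' ≤ ⨆ w', eta μ i j y w w' := le_ciSup (Set.finite_range _).bddAbove w'
    _ ≤ ⨆ w, ⨆ w', eta μ i j y w w' := le_ciSup (f := fun w => ⨆ w', eta μ i j y w w')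
        (Set.finite_range _).bddAbove w
    _ ≤ etaBar μ i j := le_ciSup (f := fun y => ⨆ w, ⨆ w', eta μ i j y w w')
        (Set.finite_range _).bddAbove y

theorem etaBar_le {c : ℝ} (hc : 0 ≤ c) (h : ∀ y w w', eta μ i j y w w' ≤ c) :
    etaBar μ i j ≤ c :=
  Real.iSup_le (fun y => Real.iSup_le (fun w => Real.iSup_le (h y w) hc) hc) hc

end EtaBar

theorem etaBar_parProd_upper_general {n : ℕ} {X Y : Type*} [Fintype X] [DecidableEq X]
    [Fintype Y] [DecidableEq Y]
    (μ : (Fin n → X) → ℝ) (ν : (Fin n → Y) → ℝ)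
    (hμpos : ∀ x, 0 < μ x) (hνpos : ∀ y, 0 < ν y)
    (i j : ℕ) :
    etaBar (parProd μ ν) i j ≤ etaBar μ i j + etaBar ν i j :=
  etaBar_le _ i j (add_nonneg (etaBar_nonneg μ i j) (etaBar_nonneg ν i j)) fun y w w' =>
    (eta_parProd_le μ ν hμpos hνpos i j y w w').trans
      (add_le_add (eta_le_etaBar μ i j _ _ _) (eta_le_etaBar ν i j _ _ _))

/-- upper bound for the η-mixing coefficients of a parallel product. -/
theorem etaBar_parProd_upper {n : ℕ} {X Y : Type*} [Fintype X] [DecidableEq X]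
    [Fintype Y] [DecidableEq Y]
    (μ : (Fin n → X) → ℝ) (ν : (Fin n → Y) → ℝ)
    (hμ : IsProbMeas μ) (hν : IsProbMeas ν)
    (hμpos : ∀ x, 0 < μ x) (hνpos : ∀ y, 0 < ν y)
    (i j : ℕ) (hi : 1 ≤ i) (hij : i < j) (hjn : j ≤ n) :
    etaBar (parProd μ ν) i j ≤ etaBar μ i j + etaBar ν i j :=
  etaBar_parProd_upper_general μ ν hμpos hνpos i j
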